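/- arXiv:1911.06763 — 6 statements merged into one kernel-verified Lean document; each statement's English description precedes it below -/
import Mathlib

section
/- Let f be holomorphic on the unit disk, a ∈ (0,1), λ ∈ ℂ with |λ| < 1, and f(az + 1 - a) = λ f(z) for all z ∈ 𝔻. Then the radial limit of f at 1 is zero: lim_{r→1⁻} f(r) = 0. -/
/-!
Put `h t = f (1 - t)`. The equation becomes `h (a t) = λ h t`, so each block
`[a^(n+1), a^n]` is the image of `[a, 1]` under `t ↦ a^n t`, and `‖h‖ ≤ ‖λ‖^n M` there, where
`M` bounds `h` on the compact fundamental block `[a, 1]` (`f` is continuous on `[0, 1 - a] ⊂ 𝔻`).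
As `t → 0⁺` the block index tends to infinity, so `h t → 0`.
-/

open Filter Set Topology

section SelfSimilar

variable {𝕜 E : Type*} [NormedField 𝕜] [NormedAddCommGroup E] [NormedSpace 𝕜 E]
  {h : ℝ → E} {a M : ℝ} {lam : 𝕜}

theorem norm_le_of_mem_Icc_pow (ha : a ∈ Ioo 0 1)
    (heq : ∀ t ∈ Ioc 0 1, h (a * t) = lam • h t) (hM : ∀ t ∈ Icc a 1, ‖h t‖ ≤ M) :
    ∀ n : ℕ, ∀ t ∈ Icc (a ^ (n + 1)) (a ^ n), ‖h t‖ ≤ ‖lam‖ ^ n * M := by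
  intro n
  induction n with
  | zero => simpa using hM
  | succ n ih =>
    rintro t ⟨hlo, hhi⟩
    have hpos : 0 < a := ha.1
    have hs : t / a ∈ Icc (a ^ (n + 1)) (a ^ n) := by
      constructor
      · rw [le_div_iff₀ hpos]; simpa [pow_succ] using hlo
      · rw [div_le_iff₀ hpos]; simpa [pow_succ] using hhi
    have hs01 : t / a ∈ Ioc 0 1 :=
      ⟨(pow_pos hpos _).trans_le hs.1, hs.2.trans (pow_le_one₀ hpos.le ha.2.le)⟩
    calc ‖h t‖ = ‖h (a * (t / a))‖ := by rw [mul_div_cancel₀ t hpos.ne']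
      _ = ‖lam‖ * ‖h (t / a)‖ := by rw [heq _ hs01, norm_smul]
      _ ≤ ‖lam‖ * (‖lam‖ ^ n * M) := by gcongr; exact ih _ hs
      _ = ‖lam‖ ^ (n + 1) * M := by ring

theorem eventually_norm_le_pow (ha : a ∈ Ioo 0 1) (hlam : ‖lam‖ < 1)
    (heq : ∀ t ∈ Ioc 0 1, h (a * t) = lam • h t) (hM : ∀ t ∈ Icc a 1, ‖h t‖ ≤ M) (N : ℕ) :
    ∀ᶠ t in 𝓝[>] 0, ‖h t‖ ≤ ‖lam‖ ^ N * M := by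
  have hM0 : 0 ≤ M := (norm_nonneg _).trans (hM 1 ⟨ha.2.le, le_rfl⟩)
  filter_upwards [Ioo_mem_nhdsGT (pow_pos ha.1 N)] with t ⟨ht0, htN⟩
  obtain ⟨n, hlo, hhi⟩ :=
    exists_nat_pow_near_of_lt_one ht0 (htN.le.trans (pow_le_one₀ ha.1.le ha.2.le)) ha.1 ha.2
  have hNn : N ≤ n := by
    by_contra! hnN
    exact (pow_le_pow_of_le_one ha.1.le ha.2.le hnN).not_gt (hlo.trans htN)
  calc ‖h t‖ ≤ ‖lam‖ ^ n * M := norm_le_of_mem_Icc_pow ha heq hM n t ⟨hlo.le, hhi⟩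
    _ ≤ ‖lam‖ ^ N * M :=
      mul_le_mul_of_nonneg_right (pow_le_pow_of_le_one (norm_nonneg _) hlam.le hNn) hM0

theorem tendsto_nhdsGT_zero_of_map_mul_eq_smul (ha : a ∈ Ioo 0 1) (hlam : ‖lam‖ < 1)
    (heq : ∀ t ∈ Ioc 0 1, h (a * t) = lam • h t) (hM : ∀ t ∈ Icc a 1, ‖h t‖ ≤ M) :
    Tendsto h (𝓝[>] 0) (𝓝 0) := by
  rw [Metric.tendsto_nhds]
  intro ε hε
  have hpow : Tendsto (fun N : ℕ => ‖lam‖ ^ N * M) atTop (𝓝 0) := by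
    simpa using (tendsto_pow_atTop_nhds_zero_of_lt_one (norm_nonneg lam) hlam).mul_const M
  obtain ⟨N, hN⟩ := (hpow.eventually_lt_const hε).exists
  filter_upwards [eventually_norm_le_pow ha hlam heq hM N] with t ht
  simpa using ht.trans_lt hN

end SelfSimilar

/-- If `f ∘ φ_a = λ f` on 𝔻 with `|λ| < 1`, then the radial limit of `f` at `1`
is zero. -/
theorem radial_limit_zero (a : ℝ) (ha : a ∈ Set.Ioo (0:ℝ) 1)
    (f : ℂ → ℂ) (lam : ℂ) (hlam : ‖lam‖ < 1)
    (hf : DifferentiableOn ℂ f (Metric.ball (0:ℂ) 1))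
    (heq : ∀ z ∈ Metric.ball (0:ℂ) 1, f ((a:ℂ) * z + (1 - a)) = lam * f z) :
    Tendsto (fun r : ℝ => f r) (nhdsWithin 1 (Set.Iio (1:ℝ))) (nhds 0) := by
  have hball : ∀ t ∈ Ioc (0 : ℝ) 1, ((1 - t : ℝ) : ℂ) ∈ Metric.ball (0 : ℂ) 1 := by
    rintro t ⟨ht0, ht1⟩
    rw [mem_ball_zero_iff, Complex.norm_real, Real.norm_eq_abs, abs_lt]
    constructor <;> linarith
  have hshift : ∀ t ∈ Ioc (0 : ℝ) 1,
      f ((1 - a * t : ℝ) : ℂ) = lam • f ((1 - t : ℝ) : ℂ) := fun t ht => by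
    rw [smul_eq_mul, ← heq _ (hball t ht)]
    push_cast; ring_nf
  have hcont : ContinuousOn (fun t : ℝ => f ((1 - t : ℝ) : ℂ)) (Icc a 1) :=
    hf.continuousOn.comp (by fun_prop) fun t ht => hball t ⟨ha.1.trans_le ht.1, ht.2⟩
  obtain ⟨M, hM⟩ := isCompact_Icc.exists_bound_of_continuousOn hcont
  have hlim := tendsto_nhdsGT_zero_of_map_mul_eq_smul ha hlam hshift hM
  have hreflect : Tendsto (fun r : ℝ => 1 - r) (𝓝[<] 1) (𝓝[>] 0) := by
    have hsub : ContinuousWithinAt (fun r : ℝ => 1 - r) (Iio 1) 1 := by fun_prop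
    have hmaps : MapsTo (fun r : ℝ => 1 - r) (Iio 1) (Ioi 0) :=
      fun r (hr : r < 1) => show 0 < 1 - r from sub_pos.2 hr
    simpa using hsub.tendsto_nhdsWithin hmaps
  exact (hlim.comp hreflect).congr fun r => by simp
end

section
/- Let f be holomorphic on 𝔻, a ∈ (0,1), λ ∈ ℂ with |λ| = 1 and λ ≠ 1, f not identically zero, and f(az + 1 - a) = λ f(z) on 𝔻. Then the radial limit lim_{r→1⁻} f(r) does not exist (as a finite limit). -/
/-!
Iterating `f ∘ φ_a = λ f` from a real point `w` with `f w ≠ 0` (one exists by the identity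
theorem) gives `f (1 - aⁿ (1 - w)) = λⁿ f w` along real points increasing to `1`. A limit `L` would
satisfy `L = λ L`, hence `L = 0`, while `‖λⁿ f w‖ = ‖f w‖ ≠ 0`.
-/

open Filter Topology Set

theorem AnalyticOnNhd.eventually_ofReal_ne_zero {U : Set ℂ} {f : ℂ → ℂ}
    (hf : AnalyticOnNhd ℂ f U) (hU : IsPreconnected U) {x : ℝ} (hx : (x : ℂ) ∈ U)
    (hne : ∃ z ∈ U, f z ≠ 0) : ∀ᶠ t : ℝ in 𝓝[≠] x, f t ≠ 0 := by
  rcases (hf x hx).eventually_eq_zero_or_eventually_ne_zero with hzero | hnonzero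
  · obtain ⟨z, hz, hfz⟩ := hne
    exact absurd (hf.eqOn_zero_of_preconnected_of_eventuallyEq_zero hU hx hzero hz) hfz
  · exact (Complex.continuous_ofReal.continuousWithinAt.tendsto_nhdsWithin
      fun _ _ ↦ by simp_all).eventually hnonzero

theorem iterate_affine_one_sub {R : Type*} [CommRing R] (a z : R) (n : ℕ) :
    (fun z ↦ a * z + (1 - a))^[n] z = 1 - a ^ n * (1 - z) := by
  induction n with
  | zero => simp
  | succ n ih => rw [Function.iterate_succ_apply', ih]; ring

theorem mapsTo_affine_ball_one {a : ℝ} (ha₀ : 0 < a) (ha₁ : a ≤ 1) :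
    MapsTo (fun z : ℂ ↦ a * z + (1 - a)) (Metric.ball 0 1) (Metric.ball 0 1) := by
  intro z hz
  rw [mem_ball_zero_iff] at hz ⊢
  calc ‖(a : ℂ) * z + (1 - a)‖ ≤ a * ‖z‖ + (1 - a) := by
        refine (norm_add_le _ _).trans ?_
        rw [norm_mul, Complex.norm_real, Real.norm_of_nonneg ha₀.le, ← Complex.ofReal_one,
          ← Complex.ofReal_sub, Complex.norm_real, Real.norm_of_nonneg (sub_nonneg.2 ha₁)]
    _ < 1 := by nlinarith

theorem apply_iterate_eq_pow_mul {α M : Type*} [Monoid M] {s : Set α} {g : α → α} {f : α → M}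
    {c : M} (hg : MapsTo g s s) (hf : ∀ z ∈ s, f (g z) = c * f z) {z : α} (hz : z ∈ s)
    (n : ℕ) : f (g^[n] z) = c ^ n * f z := by
  induction n generalizing z with
  | zero => simp
  | succ n ih => rw [Function.iterate_succ_apply, ih (hg hz), hf z hz, pow_succ, mul_assoc]

theorem tendsto_one_sub_pow_mul_nhdsLT {a c : ℝ} (ha₀ : 0 < a) (ha₁ : a < 1) (hc : 0 < c) :
    Tendsto (fun n : ℕ ↦ 1 - a ^ n * c) atTop (𝓝[<] 1) := by
  refine tendsto_nhdsWithin_iff.2 ⟨?_, Eventually.of_forall fun n ↦ ?_⟩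
  · simpa using tendsto_const_nhds.sub
      ((tendsto_pow_atTop_nhds_zero_of_lt_one ha₀.le ha₁).mul_const c)
  · simpa using mul_pos (pow_pos ha₀ n) hc

theorem not_tendsto_pow_mul_of_norm_eq_one {𝕜 : Type*} [NormedDivisionRing 𝕜] {c x L : 𝕜}
    (hc : ‖c‖ = 1) (hc₁ : c ≠ 1) (hx : x ≠ 0) :
    ¬ Tendsto (fun n : ℕ ↦ c ^ n * x) atTop (𝓝 L) := by
  intro hL
  have hshift : Tendsto (fun n : ℕ ↦ c ^ (n + 1) * x) atTop (𝓝 (c * L)) := by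
    simpa only [pow_succ', mul_assoc] using hL.const_mul c
  have hfixed : c * L = L := tendsto_nhds_unique hshift (hL.comp (tendsto_add_atTop_nat 1))
  have hL₀ : L = 0 := by
    have : (c - 1) * L = 0 := by rw [sub_mul, hfixed, one_mul, sub_self]
    exact (mul_eq_zero.1 this).resolve_left (sub_ne_zero.2 hc₁)
  have hnorm : Tendsto (fun n : ℕ ↦ ‖c ^ n * x‖) atTop (𝓝 0) := by
    simpa [hL₀] using hL.norm
  simp only [norm_mul, norm_pow, hc, one_pow, one_mul] at hnorm
  exact hx (norm_eq_zero.1 (tendsto_nhds_unique tendsto_const_nhds hnorm))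

/-- If `f ∘ φ_a = λ f` on 𝔻 with `|λ| = 1`, `λ ≠ 1`, and `f` is not identically
zero, then the radial limit of `f` at `1` does not exist. -/
theorem radial_limit_not_exists (a : ℝ) (ha : a ∈ Set.Ioo (0:ℝ) 1)
    (f : ℂ → ℂ) (lam : ℂ) (hlam : ‖lam‖ = 1) (hlam1 : lam ≠ 1)
    (hf : DifferentiableOn ℂ f (Metric.ball (0:ℂ) 1))
    (hne : ∃ z ∈ Metric.ball (0:ℂ) 1, f z ≠ 0)
    (heq : ∀ z ∈ Metric.ball (0:ℂ) 1, f ((a:ℂ) * z + (1 - a)) = lam * f z) :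
    ¬ ∃ L : ℂ, Tendsto (fun r : ℝ => f r) (nhdsWithin 1 (Set.Iio (1:ℝ))) (nhds L) := by
  rintro ⟨L, hL⟩
  obtain ⟨w, hfw, hw⟩ := ((hf.analyticOnNhd Metric.isOpen_ball).eventually_ofReal_ne_zero
    (convex_ball 0 1).isPreconnected (by simp) hne |>.and
    (eventually_nhdsWithin_of_eventually_nhds (Metric.ball_mem_nhds (0 : ℝ) one_pos))).exists
  have hw_disk : (w : ℂ) ∈ Metric.ball 0 1 := by simpa using hw
  have horbit (n : ℕ) : f ↑(1 - a ^ n * (1 - w)) = lam ^ n * f w := by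
    have := apply_iterate_eq_pow_mul (mapsTo_affine_ball_one ha.1 ha.2.le) heq hw_disk n
    rw [iterate_affine_one_sub] at this
    exact_mod_cast this
  have hw₁ : 0 < 1 - w := sub_pos.2 (abs_lt.1 (by simpa using hw)).2
  exact not_tendsto_pow_mul_of_norm_eq_one hlam hlam1 hfw
    ((hL.comp (tendsto_one_sub_pow_mul_nhdsLT ha.1 ha.2 hw₁)).congr horbit)
end

section
/- Let a ∈ (0,1) and b > 0. The singular inner function I_b(z) = exp(b(z+1)/(z-1)) satisfies I_b(φ_a(z)) = I_{b/a}(z) · exp((b/a)(a-1)) for all z ∈ 𝔻. In particular |I_b(φ_a(z))| = e^{(b/a)(a-1)} |I_{b/a}(z)|, and the subspace E_b = I_b · H² is mapped by C_{φ_a} into E_{b/a}. -/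
open Real Complex MeasureTheory intervalIntegral Metric

noncomputable def singInner (b : ℝ) (z : ℂ) : ℂ :=
  Complex.exp ((b:ℂ) * (z + 1) / (z - 1))

/-- Membership in the Hardy space `H²(𝔻)`. -/
def MemH2 (g : ℂ → ℂ) : Prop :=
  DifferentiableOn ℂ g (Metric.ball (0:ℂ) 1) ∧
  ∃ C : ℝ, ∀ r ∈ Set.Ico (0:ℝ) 1,
    (∫ θ in (0:ℝ)..(2 * π),
      ‖g ((r:ℂ) * Complex.exp ((θ:ℂ) * Complex.I))‖ ^ 2) ≤ C

/-- Membership in the singular shift-invariant subspace `E_b = I_b · H²`. -/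
def MemEb (b : ℝ) (g : ℂ → ℂ) : Prop :=
  ∃ h : ℂ → ℂ, MemH2 h ∧ ∀ z ∈ Metric.ball (0:ℂ) 1, g z = singInner b z * h z


lemma circle_average {f : ℂ → ℂ} {U : Set ℂ} (hU : IsOpen U) {c : ℂ} {R : ℝ} (hR : 0 < R)
    (hf : DifferentiableOn ℂ f U) (hcb : closedBall c R ⊆ U) :
    ∫ θ in (0:ℝ)..(2*π), f (c + R * Complex.exp (θ * Complex.I)) = 2 * π * f c := by
  have hd : DiffContOnCl ℂ f (ball c R) :=
    ⟨hf.mono ((ball_subset_closedBall).trans hcb),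
     (hf.continuousOn).mono (by rw [closure_ball c hR.ne']; exact hcb)⟩
  have key := hd.circleIntegral_sub_inv_smul (mem_ball_self hR)
  rw [circleIntegral] at key
  simp only [deriv_circleMap, smul_eq_mul] at key
  have : ∀ θ : ℝ, (circleMap 0 R θ * Complex.I) * ((circleMap c R θ - c)⁻¹ * f (circleMap c R θ))
      = Complex.I * f (circleMap c R θ) := by
    intro θ
    have hne : circleMap 0 R θ ≠ 0 := circleMap_ne_center hR.ne'
    rw [circleMap_sub_center]
    field_simp
  simp only [this] at key
  rw [intervalIntegral.integral_const_mul] at key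
  have h2 : ∀ θ : ℝ, circleMap c R θ = c + R * Complex.exp (θ * Complex.I) := by
    intro θ; simp [circleMap]
  simp only [h2] at key
  exact mul_left_cancel₀ Complex.I_ne_zero (key.trans (by ring))

lemma cauchy_circle {h : ℂ → ℂ} {U : Set ℂ} (hU : IsOpen U) {ρ : ℝ} (hρ : 0 < ρ)
    (hh : DifferentiableOn ℂ h U) (hcb : closedBall (0:ℂ) ρ ⊆ U) {w : ℂ}
    (hw : ‖w‖ < ρ) :
    ∫ t in (0:ℝ)..(2*π), (ρ * Complex.exp (t * Complex.I)) / (ρ * Complex.exp (t * Complex.I) - w)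
        * h (ρ * Complex.exp (t * Complex.I)) = 2 * π * h w := by
  have hd : DiffContOnCl ℂ h (ball (0:ℂ) ρ) :=
    ⟨hh.mono ((ball_subset_closedBall).trans hcb),
     (hh.continuousOn).mono (by rw [closure_ball (0:ℂ) hρ.ne']; exact hcb)⟩
  have hwb : w ∈ ball (0:ℂ) ρ := by simpa [mem_ball, Complex.dist_eq] using hw
  have key := hd.circleIntegral_sub_inv_smul hwb
  rw [circleIntegral] at key
  simp only [deriv_circleMap, smul_eq_mul] at key
  have hz : ∀ t : ℝ, circleMap 0 ρ t = (ρ:ℂ) * Complex.exp (t * Complex.I) := by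
    intro t; simp [circleMap]
  have hne : ∀ t : ℝ, (ρ:ℂ) * Complex.exp (t * Complex.I) - w ≠ 0 := by
    intro t hc
    apply absurd hw
    push_neg
    rw [← sub_eq_zero.mp hc]
    simp [abs_of_pos hρ]
  have : ∀ t : ℝ, (circleMap 0 ρ t * Complex.I) * ((circleMap 0 ρ t - w)⁻¹ * h (circleMap 0 ρ t))
      = Complex.I * ((ρ * Complex.exp (t * Complex.I)) / (ρ * Complex.exp (t * Complex.I) - w)
        * h (ρ * Complex.exp (t * Complex.I))) := by
    intro t
    rw [hz t]
    field_simp [hne t]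
  simp only [this] at key
  rw [intervalIntegral.integral_const_mul] at key
  exact mul_left_cancel₀ Complex.I_ne_zero (key.trans (by ring))

noncomputable def pker (ρ : ℝ) (w : ℂ) (t : ℝ) : ℝ :=
  (ρ^2 - ‖w‖ ^ 2) / ‖(ρ:ℂ) * Complex.exp ((t:ℂ) * Complex.I) - w‖ ^ 2

lemma circle_ne {ρ : ℝ} (hρ : 0 < ρ) {w : ℂ} (hw : ‖w‖ < ρ) (t : ℝ) :
    (ρ:ℂ) * Complex.exp ((t:ℂ) * Complex.I) - w ≠ 0 := by
  intro hc
  apply absurd hw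
  push_neg
  rw [← sub_eq_zero.mp hc]
  simp [abs_of_pos hρ]

lemma pker_nonneg {ρ : ℝ} (hρ : 0 < ρ) {w : ℂ} (hw : ‖w‖ < ρ) (t : ℝ) :
    0 ≤ pker ρ w t := by
  apply div_nonneg
  · nlinarith [norm_nonneg w]
  · positivity

lemma pker_continuous {ρ : ℝ} (hρ : 0 < ρ) {w : ℂ} (hw : ‖w‖ < ρ) :
    Continuous (pker ρ w) := by
  apply Continuous.div continuous_const
  · exact (continuous_norm.comp (by fun_prop)).pow 2
  · intro t
    have h0 : ‖(ρ:ℂ) * Complex.exp ((t:ℂ) * Complex.I) - w‖ ≠ 0 :=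
      norm_ne_zero_iff.mpr (circle_ne hρ hw t)
    positivity

lemma pker_eq {ρ : ℝ} (hρ : 0 < ρ) {w : ℂ} (hw : ‖w‖ < ρ) (t : ℝ) :
    ((pker ρ w t : ℝ) : ℂ) =
      (ρ * Complex.exp (t * Complex.I)) / (ρ * Complex.exp (t * Complex.I) - w)
      + (ρ:ℂ)^2 / ((ρ:ℂ)^2 - (starRingEnd ℂ) w * (ρ * Complex.exp (t * Complex.I))) - 1 := by
  set z : ℂ := (ρ:ℂ) * Complex.exp ((t:ℂ) * Complex.I) with hzdef
  have habs : ‖z‖ = ρ := by simp [hzdef, abs_of_pos hρ]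
  have hzne : z ≠ 0 := by
    intro hc; rw [hc] at habs; simp at habs; exact hρ.ne' habs.symm
  have hzz : z * (starRingEnd ℂ) z = (ρ:ℂ)^2 := by
    rw [Complex.mul_conj]
    norm_cast
    rw [Complex.normSq_eq_norm_sq, habs]
  have h1 : z - w ≠ 0 := circle_ne hρ hw t
  have h2 : (ρ:ℂ)^2 - (starRingEnd ℂ) w * z ≠ 0 := by
    intro hc
    have : ‖(starRingEnd ℂ) w * z‖ = ρ^2 := by
      rw [← sub_eq_zero.mp hc]; norm_cast; simp [abs_of_pos hρ]
    rw [norm_mul, Complex.norm_conj, habs] at this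
    nlinarith
  have h1' : (starRingEnd ℂ) z - (starRingEnd ℂ) w ≠ 0 := by
    rw [← map_sub, starRingEnd_apply, ne_eq, star_eq_zero]
    exact h1
  have e1 : ((‖z - w‖ : ℝ) : ℂ)^2 = (z - w) * ((starRingEnd ℂ) z - (starRingEnd ℂ) w) := by
    rw [← Complex.ofReal_pow, Complex.sq_norm, ← Complex.mul_conj, map_sub]
  have e2 : ((‖w‖ : ℝ) : ℂ)^2 = w * (starRingEnd ℂ) w := by
    rw [← Complex.ofReal_pow, Complex.sq_norm, ← Complex.mul_conj]
  rw [pker]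
  push_cast
  rw [← hzdef, e1, e2]
  clear_value z
  rw [div_add_div _ _ h1 h2, div_sub_one (mul_ne_zero h1 h2),
    div_eq_div_iff (mul_ne_zero h1 h1') (mul_ne_zero h1 h2)]
  linear_combination (-((ρ:ℂ)^2 - w*(starRingEnd ℂ) w)*(z-w)) * hzz

lemma circle_cont {ρ : ℝ} : Continuous (fun t : ℝ => (ρ:ℂ) * Complex.exp ((t:ℂ) * Complex.I)) := by
  fun_prop

lemma comp_circle_cont {h : ℂ → ℂ} {U : Set ℂ} {ρ : ℝ} (hρ : 0 < ρ)
    (hh : ContinuousOn h U) (hcb : closedBall (0:ℂ) ρ ⊆ U) :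
    Continuous (fun t : ℝ => h ((ρ:ℂ) * Complex.exp ((t:ℂ) * Complex.I))) := by
  apply hh.comp_continuous circle_cont
  intro t
  apply hcb
  simp [mem_closedBall, Complex.dist_eq, abs_of_pos hρ]

lemma poisson_rep {h : ℂ → ℂ} {U : Set ℂ} (hU : IsOpen U) (hh : DifferentiableOn ℂ h U)
    {ρ : ℝ} (hρ : 0 < ρ) (hcb : closedBall (0:ℂ) ρ ⊆ U) {w : ℂ} (hw : ‖w‖ < ρ) :
    ∫ t in (0:ℝ)..(2*π), ((pker ρ w t : ℝ) : ℂ) * h ((ρ:ℂ) * Complex.exp ((t:ℂ) * Complex.I))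
      = 2 * π * h w := by
  set z : ℝ → ℂ := fun t => (ρ:ℂ) * Complex.exp ((t:ℂ) * Complex.I) with hz
  have hcont : Continuous fun t => h (z t) := comp_circle_cont hρ hh.continuousOn hcb
  have hK1 : Continuous fun t => z t / (z t - w) :=
    (circle_cont).div ((circle_cont).sub continuous_const) (fun t => circle_ne hρ hw t)
  have hK2 : Continuous fun t => (ρ:ℂ)^2 / ((ρ:ℂ)^2 - (starRingEnd ℂ) w * z t) := by
    apply continuous_const.div (by fun_prop)
    intro t
    intro hc
    have : ‖(starRingEnd ℂ) w * z t‖ = ρ^2 := by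
      rw [← sub_eq_zero.mp hc]; norm_cast; simp [abs_of_pos hρ]
    rw [norm_mul, Complex.norm_conj] at this
    simp only [hz, norm_mul, Complex.norm_real, Real.norm_eq_abs, Complex.norm_exp_ofReal_mul_I, mul_one,
      abs_of_pos hρ] at this
    nlinarith
  have i1 : IntervalIntegrable (fun t => z t / (z t - w) * h (z t)) volume 0 (2*π) :=
    (hK1.mul hcont).intervalIntegrable _ _
  have i2 : IntervalIntegrable
      (fun t => (ρ:ℂ)^2 / ((ρ:ℂ)^2 - (starRingEnd ℂ) w * z t) * h (z t)) volume 0 (2*π) :=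
    (hK2.mul hcont).intervalIntegrable _ _
  have i3 : IntervalIntegrable (fun t => h (z t)) volume 0 (2*π) :=
    hcont.intervalIntegrable _ _
  have step : ∀ t : ℝ, ((pker ρ w t : ℝ) : ℂ) * h (z t)
      = (z t / (z t - w) * h (z t) + (ρ:ℂ)^2 / ((ρ:ℂ)^2 - (starRingEnd ℂ) w * z t) * h (z t))
        - h (z t) := by
    intro t
    rw [pker_eq hρ hw t]
    ring
  calc ∫ t in (0:ℝ)..(2*π), ((pker ρ w t : ℝ) : ℂ) * h (z t)
      = ∫ t in (0:ℝ)..(2*π),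
          ((z t / (z t - w) * h (z t) + (ρ:ℂ)^2 / ((ρ:ℂ)^2 - (starRingEnd ℂ) w * z t) * h (z t))
            - h (z t)) := by simp_rw [step]
    _ = (∫ t in (0:ℝ)..(2*π), z t / (z t - w) * h (z t))
        + (∫ t in (0:ℝ)..(2*π), (ρ:ℂ)^2 / ((ρ:ℂ)^2 - (starRingEnd ℂ) w * z t) * h (z t))
        - ∫ t in (0:ℝ)..(2*π), h (z t) := by
          rw [intervalIntegral.integral_sub (i1.add i2) i3, intervalIntegral.integral_add i1 i2]
    _ = 2 * π * h w := by
        have e1 : ∫ t in (0:ℝ)..(2*π), z t / (z t - w) * h (z t) = 2 * π * h w :=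
          cauchy_circle hU hρ hh hcb hw
        have e3 : ∫ t in (0:ℝ)..(2*π), h (z t) = 2 * π * h 0 := by
          have := circle_average hU hρ hh hcb
          simpa [hz] using this
        have e2 : ∫ t in (0:ℝ)..(2*π), (ρ:ℂ)^2 / ((ρ:ℂ)^2 - (starRingEnd ℂ) w * z t) * h (z t)
            = 2 * π * h 0 := by
          set V : Set ℂ := U ∩ {ζ | ‖w‖ * ‖ζ‖ < ρ^2} with hV
          have hVopen : IsOpen V := hU.inter (isOpen_lt (continuous_const.mul continuous_norm) continuous_const)
          have hcbV : closedBall (0:ℂ) ρ ⊆ V := by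
            intro ζ hζ
            simp only [mem_closedBall, Complex.dist_eq, sub_zero] at hζ
            refine ⟨hcb (by simpa [mem_closedBall, Complex.dist_eq] using hζ), ?_⟩
            simp only [Set.mem_setOf_eq]
            calc ‖w‖ * ‖ζ‖ ≤ ‖w‖ * ρ := by
                  exact mul_le_mul_of_nonneg_left hζ (norm_nonneg w)
              _ < ρ * ρ := by exact mul_lt_mul_of_pos_right hw hρ
              _ = ρ^2 := by ring
          have hFd : DifferentiableOn ℂ
              (fun ζ => (ρ:ℂ)^2 / ((ρ:ℂ)^2 - (starRingEnd ℂ) w * ζ) * h ζ) V := by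
            apply DifferentiableOn.mul _ (hh.mono Set.inter_subset_left)
            apply DifferentiableOn.div (differentiableOn_const _) (by fun_prop)
            intro ζ hζ
            intro hc
            have h1 : ‖(starRingEnd ℂ) w * ζ‖ = ρ^2 := by
              rw [← sub_eq_zero.mp hc]; norm_cast; simp [abs_of_pos hρ]
            rw [norm_mul, Complex.norm_conj] at h1
            exact absurd h1 (ne_of_lt hζ.2)
          have := circle_average hVopen hρ hFd hcbV
          simp only [zero_add] at this
          rw [this]
          rw [mul_zero, sub_zero]
          rw [div_self (pow_ne_zero 2 (Complex.ofReal_ne_zero.mpr hρ.ne')), one_mul]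
        rw [e1, e2, e3]
        ring

lemma integral_cs {P q : ℝ → ℝ} (hP : Continuous P) (hq : Continuous q) (hPnn : ∀ t, 0 ≤ P t) :
    (∫ t in (0:ℝ)..(2*π), P t * q t)^2 ≤
      (∫ t in (0:ℝ)..(2*π), P t) * (∫ t in (0:ℝ)..(2*π), P t * (q t)^2) := by
  set A := ∫ t in (0:ℝ)..(2*π), P t with hA
  set B := ∫ t in (0:ℝ)..(2*π), P t * q t with hB
  set C := ∫ t in (0:ℝ)..(2*π), P t * (q t)^2 with hC
  have h2π : (0:ℝ) ≤ 2*π := by positivity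
  have key : ∀ lam : ℝ, 0 ≤ A * (lam * lam) + (-2*B) * lam + C := by
    intro lam
    have h0 : 0 ≤ ∫ t in (0:ℝ)..(2*π), P t * (q t - lam)^2 :=
      intervalIntegral.integral_nonneg h2π (fun t _ => mul_nonneg (hPnn t) (sq_nonneg _))
    have hfe : (fun t => P t * (q t - lam)^2)
        = fun t => (P t * (q t)^2 - 2*lam*(P t * q t)) + lam^2 * P t := funext fun t => by ring
    rw [hfe, intervalIntegral.integral_add (f := fun t => P t * (q t)^2 - 2*lam*(P t * q t)) (g := fun t => lam^2 * P t)
        (((hP.mul (hq.pow 2)).sub (continuous_const.mul (hP.mul hq))).intervalIntegrable _ _)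
        ((continuous_const.mul hP).intervalIntegrable _ _),
      intervalIntegral.integral_sub (f := fun t => P t * (q t)^2) (g := fun t => 2*lam*(P t * q t)) ((hP.mul (hq.pow 2)).intervalIntegrable _ _)
        ((continuous_const.mul (hP.mul hq)).intervalIntegrable _ _),
      intervalIntegral.integral_const_mul, intervalIntegral.integral_const_mul] at h0
    rw [← hA, ← hB, ← hC] at h0
    nlinarith [h0]
  have hd := discrim_le_zero key
  rw [discrim] at hd
  nlinarith [hd]

lemma pker_integral {ρ : ℝ} (hρ : 0 < ρ) {w : ℂ} (hw : ‖w‖ < ρ) :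
    ∫ t in (0:ℝ)..(2*π), pker ρ w t = 2*π := by
  have h1 := poisson_rep (h := fun _ => (1:ℂ)) (U := Set.univ) isOpen_univ
    (differentiableOn_const _) hρ (Set.subset_univ _) hw
  simp only [mul_one] at h1
  rw [integral_ofReal] at h1
  exact_mod_cast h1

lemma poisson_bound {h : ℂ → ℂ} {U : Set ℂ} (hU : IsOpen U) (hh : DifferentiableOn ℂ h U)
    {ρ : ℝ} (hρ : 0 < ρ) (hcb : closedBall (0:ℂ) ρ ⊆ U) {w : ℂ} (hw : ‖w‖ < ρ) :
    2*π * ‖h w‖^2 ≤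
      ∫ t in (0:ℝ)..(2*π), pker ρ w t * ‖h ((ρ:ℂ) * Complex.exp ((t:ℂ) * Complex.I))‖^2 := by
  set q : ℝ → ℝ := fun t => ‖h ((ρ:ℂ) * Complex.exp ((t:ℂ) * Complex.I))‖ with hq
  have hqc : Continuous q := continuous_norm.comp (comp_circle_cont hρ hh.continuousOn hcb)
  have hPc : Continuous (pker ρ w) := pker_continuous hρ hw
  have h2π : (0:ℝ) ≤ 2*π := by positivity
  have habs : 2*π*‖h w‖ ≤ ∫ t in (0:ℝ)..(2*π), pker ρ w t * q t := by
    have hrep := poisson_rep hU hh hρ hcb hw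
    have e0 : 2*π*‖h w‖ = ‖2 * (π:ℂ) * h w‖ := by
      rw [norm_mul, norm_mul, Complex.norm_two, Complex.norm_real, Real.norm_eq_abs,
        _root_.abs_of_nonneg Real.pi_pos.le]
    rw [e0, ← hrep]
    have hn : ‖∫ t in (0:ℝ)..(2*π), ((pker ρ w t : ℝ) : ℂ)
        * h ((ρ:ℂ) * Complex.exp ((t:ℂ) * Complex.I))‖ ≤
        ∫ t in (0:ℝ)..(2*π), ‖((pker ρ w t : ℝ) : ℂ) * h ((ρ:ℂ) * Complex.exp ((t:ℂ) * Complex.I))‖ := by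
      exact intervalIntegral.norm_integral_le_integral_norm h2π
    refine le_trans hn ?_
    apply le_of_eq
    apply intervalIntegral.integral_congr
    intro t _
    simp only [norm_mul, Complex.norm_real, Real.norm_eq_abs]
    rw [_root_.abs_of_nonneg (pker_nonneg hρ hw t)]
  have hcs := integral_cs hPc hqc (pker_nonneg hρ hw)
  rw [pker_integral hρ hw] at hcs
  have h1 := mul_self_le_mul_self (by positivity) habs
  have hhw : (0:ℝ) ≤ ‖h w‖ := norm_nonneg _
  nlinarith [Real.pi_pos, hcs, h1]

/-- Mean of the Poisson kernel over a circle of centers. -/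
lemma kernel_avg {ρ : ℝ} (hρ : 0 < ρ) {c : ℂ} {s : ℝ} (hs : 0 ≤ s)
    (hlt : ‖c‖ + s < ρ) (t : ℝ) :
    ∫ θ in (0:ℝ)..(2*π), pker ρ (c + (s:ℂ) * Complex.exp ((θ:ℂ) * Complex.I)) t
      = 2*π * pker ρ c t := by
  have habsc : ‖c‖ < ρ := lt_of_le_of_lt (by linarith) hlt
  have hwθ : ∀ θ : ℝ, ‖c + (s:ℂ) * Complex.exp ((θ:ℂ) * Complex.I)‖ < ρ := by
    intro θ
    calc ‖c + (s:ℂ) * Complex.exp ((θ:ℂ) * Complex.I)‖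
        ≤ ‖c‖ + ‖(s:ℂ) * Complex.exp ((θ:ℂ) * Complex.I)‖ :=
          norm_add_le _ _
      _ = ‖c‖ + s := by
          rw [norm_mul, Complex.norm_real, Real.norm_eq_abs, Complex.norm_exp_ofReal_mul_I, mul_one,
            _root_.abs_of_nonneg hs]
      _ < ρ := hlt
  rcases eq_or_lt_of_le hs with hs0 | hs0
  · simp only [← hs0, Complex.ofReal_zero, zero_mul, add_zero]
    rw [intervalIntegral.integral_const, smul_eq_mul]
    ring
  -- complex version
  set z : ℂ := (ρ:ℂ) * Complex.exp ((t:ℂ) * Complex.I) with hz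
  have habsz : ‖z‖ = ρ := by
    rw [hz, norm_mul, Complex.norm_real, Real.norm_eq_abs, Complex.norm_exp_ofReal_mul_I, mul_one,
      _root_.abs_of_pos hρ]
  set F : ℂ → ℂ := fun v => z / (z - v) with hF
  set G : ℂ → ℂ := fun v => (ρ:ℂ)^2 / ((ρ:ℂ)^2 - v * (starRingEnd ℂ) z) with hG
  have hzs : ∀ v : ℂ, ‖v‖ < ρ → z - v ≠ 0 := by
    intro v hv hc
    rw [sub_eq_zero] at hc
    rw [← hc] at hv
    exact absurd habsz (ne_of_lt hv)
  have hgs : ∀ v : ℂ, ‖v‖ < ρ → (ρ:ℂ)^2 - v * (starRingEnd ℂ) z ≠ 0 := by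
    intro v hv hc
    have : ‖v * (starRingEnd ℂ) z‖ = ρ^2 := by
      rw [← sub_eq_zero.mp hc]; norm_cast; simp [_root_.abs_of_pos hρ]
    rw [norm_mul, Complex.norm_conj, habsz] at this
    nlinarith [norm_nonneg v]
  have hUsub : closedBall c s ⊆ ball (0:ℂ) ρ := by
    intro v hv
    rw [mem_closedBall, Complex.dist_eq] at hv
    rw [mem_ball, Complex.dist_eq, sub_zero]
    calc ‖v‖ = ‖c + (v - c)‖ := by ring_nf
      _ ≤ ‖c‖ + ‖v - c‖ := norm_add_le _ _
      _ ≤ ‖c‖ + s := by linarith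
      _ < ρ := hlt
  have hFd : DifferentiableOn ℂ F (ball (0:ℂ) ρ) := by
    apply DifferentiableOn.div (differentiableOn_const _) (by fun_prop)
    intro v hv
    exact hzs v (by simpa [mem_ball, Complex.dist_eq] using hv)
  have hGd : DifferentiableOn ℂ G (ball (0:ℂ) ρ) := by
    apply DifferentiableOn.div (differentiableOn_const _) (by fun_prop)
    intro v hv
    exact hgs v (by simpa [mem_ball, Complex.dist_eq] using hv)
  have hFavg := circle_average isOpen_ball hs0 hFd hUsub
  have hGavg := circle_average isOpen_ball hs0 hGd hUsub
  -- continuity of everything in θ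
  have hwcont : Continuous (fun θ : ℝ => c + (s:ℂ) * Complex.exp ((θ:ℂ) * Complex.I)) := by
    fun_prop
  have hFc : Continuous fun θ : ℝ => F (c + (s:ℂ) * Complex.exp ((θ:ℂ) * Complex.I)) := by
    apply Continuous.div continuous_const (by fun_prop)
    intro θ; exact hzs _ (hwθ θ)
  have hGc : Continuous fun θ : ℝ => G (c + (s:ℂ) * Complex.exp ((θ:ℂ) * Complex.I)) := by
    apply Continuous.div continuous_const (by fun_prop)
    intro θ; exact hgs _ (hwθ θ)
  -- complex identity
  have key : ∀ θ : ℝ, ((pker ρ (c + (s:ℂ) * Complex.exp ((θ:ℂ) * Complex.I)) t : ℝ) : ℂ)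
      = F (c + (s:ℂ) * Complex.exp ((θ:ℂ) * Complex.I))
        + (starRingEnd ℂ) (G (c + (s:ℂ) * Complex.exp ((θ:ℂ) * Complex.I))) - 1 := by
    intro θ
    rw [pker_eq hρ (hwθ θ) t]
    simp only [hF, hG, map_div₀, map_sub, map_pow, map_mul, Complex.conj_conj]
    push_cast [Complex.conj_ofReal]
    ring
  have hC : ∫ θ in (0:ℝ)..(2*π), ((pker ρ (c + (s:ℂ) * Complex.exp ((θ:ℂ) * Complex.I)) t : ℝ) : ℂ)
      = 2*π * ((pker ρ c t : ℝ) : ℂ) := by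
    simp_rw [key]
    have h2π : (0:ℝ) ≤ 2*π := by positivity
    have hGc' : Continuous fun θ : ℝ =>
        (starRingEnd ℂ) (G (c + (s:ℂ) * Complex.exp ((θ:ℂ) * Complex.I))) :=
      Complex.continuous_conj.comp hGc
    rw [intervalIntegral.integral_sub (f := fun θ => F (c + (s:ℂ) * Complex.exp ((θ:ℂ) * Complex.I)) + (starRingEnd ℂ) (G (c + (s:ℂ) * Complex.exp ((θ:ℂ) * Complex.I)))) (g := fun _ => (1:ℂ)) ((hFc.add hGc').intervalIntegrable _ _)
        (continuous_const.intervalIntegrable _ _),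
      intervalIntegral.integral_add (hFc.intervalIntegrable _ _) (hGc'.intervalIntegrable _ _)]
    have hconj : ∫ θ in (0:ℝ)..(2*π), (starRingEnd ℂ) (G (c + (s:ℂ) * Complex.exp ((θ:ℂ) * Complex.I)))
        = (starRingEnd ℂ) (∫ θ in (0:ℝ)..(2*π), G (c + (s:ℂ) * Complex.exp ((θ:ℂ) * Complex.I))) := by
      rw [intervalIntegral.integral_of_le h2π, intervalIntegral.integral_of_le h2π, integral_conj]
    rw [hconj, hFavg, hGavg, intervalIntegral.integral_const]
    rw [pker_eq hρ habsc t]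
    simp only [hF, hG, map_div₀, map_sub, map_pow, map_mul, map_ofNat, Complex.conj_ofReal,
      Complex.conj_conj, Complex.real_smul, smul_eq_mul]
    push_cast
    ring
  have := hC
  rw [intervalIntegral.integral_ofReal] at this
  exact_mod_cast this

lemma swap_int {F : ℝ → ℝ → ℝ} (hF : Continuous (Function.uncurry F)) :
    ∫ θ in (0:ℝ)..(2*π), (∫ t in (0:ℝ)..(2*π), F θ t)
      = ∫ t in (0:ℝ)..(2*π), (∫ θ in (0:ℝ)..(2*π), F θ t) := by
  have h2π : (0:ℝ) ≤ 2*π := by positivity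
  simp_rw [intervalIntegral.integral_of_le h2π]
  set μ : Measure ℝ := volume.restrict (Set.Ioc (0:ℝ) (2*π)) with hμ
  haveI : IsFiniteMeasure μ := by
    constructor
    rw [hμ, Measure.restrict_apply_univ, Real.volume_Ioc]
    exact ENNReal.ofReal_lt_top
  apply MeasureTheory.integral_integral_swap
  obtain ⟨M, hM⟩ := (isCompact_Icc.prod isCompact_Icc :
      IsCompact (Set.Icc (0:ℝ) (2*π) ×ˢ Set.Icc (0:ℝ) (2*π))).exists_bound_of_continuousOn
    hF.continuousOn
  refine ⟨hF.aestronglyMeasurable, ?_⟩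
  apply MeasureTheory.HasFiniteIntegral.of_bounded (C := M)
  rw [hμ, Measure.prod_restrict]
  filter_upwards [ae_restrict_mem (measurableSet_Ioc.prod measurableSet_Ioc)] with x hx
  exact hM x ⟨Set.Ioc_subset_Icc_self hx.1, Set.Ioc_subset_Icc_self hx.2⟩

lemma pker_le {ρ : ℝ} (hρ : 0 < ρ) {w : ℂ} (hw : ‖w‖ < ρ) (t : ℝ) :
    pker ρ w t ≤ (ρ^2 - ‖w‖ ^2) / (ρ - ‖w‖)^2 := by
  have h1 : ρ - ‖w‖ ≤ ‖(ρ:ℂ) * Complex.exp ((t:ℂ) * Complex.I) - w‖ := by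
    have := norm_sub_norm_le ((ρ:ℂ) * Complex.exp ((t:ℂ) * Complex.I)) w
    simp only [norm_mul, Complex.norm_real, Real.norm_eq_abs,
      Complex.norm_exp_ofReal_mul_I, mul_one, _root_.abs_of_pos hρ] at this
    exact this
  have h2 : (ρ - ‖w‖)^2 ≤ ‖(ρ:ℂ) * Complex.exp ((t:ℂ) * Complex.I) - w‖^2 := by
    apply sq_le_sq'
    · nlinarith [norm_nonneg ((ρ:ℂ) * Complex.exp ((t:ℂ) * Complex.I) - w)]
    · exact h1
  apply div_le_div_of_nonneg_left _ (pow_pos (by linarith : (0:ℝ) < ρ - ‖w‖) 2) h2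
  nlinarith [norm_nonneg w]

lemma main_bound {a : ℝ} (ha : a ∈ Set.Ioo (0:ℝ) 1) {h : ℂ → ℂ}
    (hh : DifferentiableOn ℂ h (ball (0:ℂ) 1)) {C : ℝ}
    (hC : ∀ s ∈ Set.Ico (0:ℝ) 1,
      (∫ t in (0:ℝ)..(2*π), ‖h ((s:ℂ) * Complex.exp ((t:ℂ) * Complex.I))‖^2) ≤ C)
    {r : ℝ} (hr : r ∈ Set.Ico (0:ℝ) 1) :
    (∫ θ in (0:ℝ)..(2*π),
        ‖h (((1-a:ℝ):ℂ) + ((a*r:ℝ):ℂ) * Complex.exp ((θ:ℂ) * Complex.I))‖^2)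
      ≤ 4*C/a := by
  obtain ⟨ha0, ha1⟩ := ha
  obtain ⟨hr0, hr1⟩ := hr
  set R : ℝ := 1 - a + a*r with hR
  set ρ : ℝ := (R+1)/2 with hρdef
  have hR0 : 0 < R := by nlinarith
  have hR1 : R < 1 := by nlinarith
  have hρR : R < ρ := by rw [hρdef]; linarith
  have hρ : 0 < ρ := lt_trans hR0 hρR
  have hρ1 : ρ < 1 := by rw [hρdef]; linarith
  have h2π : (0:ℝ) ≤ 2*π := by positivity
  have hcb : closedBall (0:ℂ) ρ ⊆ ball (0:ℂ) 1 := by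
    intro v hv
    rw [mem_closedBall, Complex.dist_eq, sub_zero] at hv
    rw [mem_ball, Complex.dist_eq, sub_zero]
    linarith
  set c : ℂ := ((1-a:ℝ):ℂ) with hc
  set w : ℝ → ℂ := fun θ => c + ((a*r:ℝ):ℂ) * Complex.exp ((θ:ℂ) * Complex.I) with hwdef
  have habsc : ‖c‖ = 1 - a := by
    rw [hc, Complex.norm_real, Real.norm_eq_abs, _root_.abs_of_nonneg (by linarith)]
  have hclt : ‖c‖ + a*r < ρ := by rw [habsc]; linarith [hρR]
  have har : (0:ℝ) ≤ a*r := by positivity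
  have hwθ : ∀ θ : ℝ, ‖w θ‖ < ρ := by
    intro θ
    calc ‖w θ‖ ≤ ‖c‖ + ‖((a*r:ℝ):ℂ) * Complex.exp ((θ:ℂ) * Complex.I)‖ :=
          norm_add_le _ _
      _ = ‖c‖ + a*r := by
          congr 1
          rw [norm_mul, Complex.norm_real, Real.norm_eq_abs, Complex.norm_exp_ofReal_mul_I, mul_one,
            _root_.abs_of_nonneg har]
      _ < ρ := hclt
  have hccρ : ‖c‖ < ρ := by rw [habsc]; linarith
  -- continuity pieces
  have hwcont : Continuous w := by rw [hwdef]; fun_prop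
  have hq : Continuous (fun t : ℝ => ‖h ((ρ:ℂ) * Complex.exp ((t:ℂ) * Complex.I))‖^2) :=
    ((continuous_norm.comp (comp_circle_cont hρ hh.continuousOn hcb)).pow 2)
  have hqnn : ∀ t : ℝ, 0 ≤ ‖h ((ρ:ℂ) * Complex.exp ((t:ℂ) * Complex.I))‖^2 :=
    fun t => sq_nonneg _
  set q : ℝ → ℝ := fun t => ‖h ((ρ:ℂ) * Complex.exp ((t:ℂ) * Complex.I))‖^2 with hqdef
  set F : ℝ → ℝ → ℝ := fun θ t => pker ρ (w θ) t * q t with hFdef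
  have hF2 : Continuous (Function.uncurry F) := by
    rw [hFdef]
    apply Continuous.mul _ (hq.comp continuous_snd)
    unfold pker
    apply Continuous.div
    · exact continuous_const.sub ((continuous_norm.comp (hwcont.comp continuous_fst)).pow 2)
    · exact (continuous_norm.comp (by fun_prop)).pow 2
    · intro p
      have := circle_ne hρ (hwθ p.1) p.2
      have habs0 : ‖(ρ:ℂ) * Complex.exp ((p.2:ℂ) * Complex.I) - w p.1‖ ≠ 0 :=
        norm_ne_zero_iff.mpr this
      positivity
  have hwc : Continuous fun θ : ℝ => ‖h (w θ)‖^2 := by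
    have hcw : Continuous fun θ : ℝ => h (w θ) :=
      hh.continuousOn.comp_continuous hwcont
        (fun θ => by rw [mem_ball, Complex.dist_eq, sub_zero]; linarith [hwθ θ])
    exact (continuous_norm.comp hcw).pow 2
  -- pointwise Poisson bound
  have hpb : ∀ θ : ℝ, ‖h (w θ)‖^2 ≤ (1/(2*π)) * ∫ t in (0:ℝ)..(2*π), F θ t := by
    intro θ
    have hpois := poisson_bound isOpen_ball hh hρ hcb (hwθ θ)
    have hFq : (∫ t in (0:ℝ)..(2*π), F θ t) = ∫ t in (0:ℝ)..(2*π),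
        pker ρ (w θ) t * ‖h ((ρ:ℂ) * Complex.exp ((t:ℂ) * Complex.I))‖^2 := rfl
    rw [hFq, div_mul_eq_mul_div, le_div_iff₀ (by positivity)]
    nlinarith [hpois]
  have hGcont : Continuous fun θ : ℝ => ∫ t in (0:ℝ)..(2*π), F θ t :=
    intervalIntegral.continuous_parametric_intervalIntegral_of_continuous' hF2 0 (2*π)
  calc (∫ θ in (0:ℝ)..(2*π), ‖h (w θ)‖^2)
      ≤ ∫ θ in (0:ℝ)..(2*π), (1/(2*π)) * ∫ t in (0:ℝ)..(2*π), F θ t := by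
        apply intervalIntegral.integral_mono_on h2π (hwc.intervalIntegrable _ _)
          ((continuous_const.mul hGcont).intervalIntegrable _ _)
        exact fun θ _ => hpb θ
    _ = (1/(2*π)) * ∫ θ in (0:ℝ)..(2*π), ∫ t in (0:ℝ)..(2*π), F θ t := by
        rw [intervalIntegral.integral_const_mul]
    _ = (1/(2*π)) * ∫ t in (0:ℝ)..(2*π), ∫ θ in (0:ℝ)..(2*π), F θ t := by rw [swap_int hF2]
    _ = (1/(2*π)) * ∫ t in (0:ℝ)..(2*π), 2*π * pker ρ c t * q t := by
        congr 1
        apply intervalIntegral.integral_congr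
        intro t _
        rw [hFdef]
        simp only
        rw [intervalIntegral.integral_mul_const, kernel_avg hρ har hclt t]
    _ ≤ (1/(2*π)) * ∫ t in (0:ℝ)..(2*π), 2*π * (4/a) * q t := by
        apply mul_le_mul_of_nonneg_left _ (by positivity)
        apply intervalIntegral.integral_mono_on h2π
          (((continuous_const.mul ((pker_continuous hρ hccρ))).mul hq).intervalIntegrable _ _)
          ((continuous_const.mul hq).intervalIntegrable _ _)
        intro t _
        apply mul_le_mul_of_nonneg_right _ (hqnn t)
        apply mul_le_mul_of_nonneg_left _ (by positivity)
        calc pker ρ c t ≤ (ρ^2 - ‖c‖ ^2) / (ρ - ‖c‖)^2 := pker_le hρ hccρ t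
          _ ≤ 4/a := by
              rw [habsc]
              rw [div_le_div_iff₀ (by nlinarith) (by linarith)]
              have hρx : ρ - (1-a) = a*(1+r)/2 := by rw [hρdef, hR]; ring
              nlinarith [sq_nonneg (ρ - (1-a))]
    _ = 4/a * ∫ t in (0:ℝ)..(2*π), q t := by
        rw [intervalIntegral.integral_const_mul]
        field_simp
    _ ≤ 4/a * C := by
        apply mul_le_mul_of_nonneg_left _ (by positivity)
        exact hC ρ ⟨hρ.le, hρ1⟩
    _ = 4*C/a := by ring

/-- `I_b ∘ φ_a = e^{(b/a)(a-1)} I_{b/a}` on 𝔻, the corresponding modulus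
identity, and `C_{φ_a} E_b ⊆ E_{b/a}`. -/
theorem singular_inner_transform (a : ℝ) (ha : a ∈ Set.Ioo (0:ℝ) 1)
    (b : ℝ) (hb : 0 < b) :
    (∀ z ∈ Metric.ball (0:ℂ) 1,
      singInner b ((a:ℂ) * z + (1 - a)) =
        singInner (b / a) z * Complex.exp (((b / a : ℝ) : ℂ) * ((a:ℂ) - 1))) ∧
    (∀ z ∈ Metric.ball (0:ℂ) 1,
      ‖singInner b ((a:ℂ) * z + (1 - a))‖ =
        Real.exp ((b / a) * (a - 1)) * ‖singInner (b / a) z‖) ∧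
    (∀ g : ℂ → ℂ, MemEb b g →
      MemEb (b / a) (fun z => g ((a:ℂ) * z + (1 - a)))) := by
  obtain ⟨ha0, ha1⟩ := ha
  have ha0' : (a:ℂ) ≠ 0 := by exact_mod_cast ha0.ne'
  have hzball : ∀ z : ℂ, z ∈ Metric.ball (0:ℂ) 1 → z - 1 ≠ 0 := by
    intro z hz hc
    rw [Metric.mem_ball, Complex.dist_eq, sub_zero] at hz
    rw [sub_eq_zero] at hc
    rw [hc] at hz
    simp at hz
  have hden : ∀ z : ℂ, z ∈ Metric.ball (0:ℂ) 1 → (a:ℂ) * z + (1 - a) - 1 ≠ 0 := by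
    intro z hz
    have : (a:ℂ) * z + (1 - a) - 1 = (a:ℂ) * (z - 1) := by ring
    rw [this]
    exact mul_ne_zero ha0' (hzball z hz)
  have part1 : ∀ z ∈ Metric.ball (0:ℂ) 1,
      singInner b ((a:ℂ) * z + (1 - a)) =
        singInner (b / a) z * Complex.exp (((b / a : ℝ) : ℂ) * ((a:ℂ) - 1)) := by
    intro z hz
    rw [singInner, singInner, ← Complex.exp_add]
    congr 1
    have h1 := hzball z hz
    have h2 := hden z hz
    push_cast
    field_simp
    ring
  have mapsto : ∀ z : ℂ, z ∈ Metric.ball (0:ℂ) 1 → (a:ℂ) * z + (1 - a) ∈ Metric.ball (0:ℂ) 1 := by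
    intro z hz
    rw [Metric.mem_ball, Complex.dist_eq, sub_zero] at hz ⊢
    calc ‖(a:ℂ) * z + (1 - a)‖ ≤ ‖(a:ℂ) * z‖ + ‖1 - (a:ℂ)‖ :=
          norm_add_le _ _
      _ = a * ‖z‖ + (1 - a) := by
          rw [norm_mul, Complex.norm_real, Real.norm_eq_abs, _root_.abs_of_pos ha0]
          congr 1
          have : (1 - (a:ℂ)) = (((1-a:ℝ)):ℂ) := by push_cast; ring
          rw [this, Complex.norm_real, Real.norm_eq_abs, _root_.abs_of_nonneg (by linarith)]
      _ < a * 1 + (1 - a) := by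
          have := mul_lt_mul_of_pos_left hz ha0
          linarith
      _ = 1 := by ring
  have part2 : ∀ z ∈ Metric.ball (0:ℂ) 1,
      ‖singInner b ((a:ℂ) * z + (1 - a))‖ =
        Real.exp ((b / a) * (a - 1)) * ‖singInner (b / a) z‖ := by
    intro z hz
    rw [part1 z hz, norm_mul]
    have : (((b / a : ℝ)) : ℂ) * ((a:ℂ) - 1) = (((b/a*(a-1) : ℝ)) : ℂ) := by push_cast; ring
    rw [this, Complex.norm_exp]
    rw [Complex.ofReal_re]
    ring
  refine ⟨part1, part2, ?_⟩
  rintro g ⟨h, ⟨hdiff, C, hC⟩, hfac⟩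
  set K : ℝ := Real.exp ((b/a) * (a-1)) with hK
  refine ⟨fun z => Complex.exp (((b / a : ℝ) : ℂ) * ((a:ℂ) - 1)) * h ((a:ℂ) * z + (1 - a)),
    ⟨?_, ?_⟩, ?_⟩
  · apply DifferentiableOn.const_mul
    apply DifferentiableOn.comp hdiff
    · exact (differentiable_id.const_mul _ |>.add_const _).differentiableOn
    · exact fun z hz => mapsto z hz
  · refine ⟨K^2 * (4*C/a), ?_⟩
    intro r hr
    have key := main_bound ⟨ha0, ha1⟩ hdiff hC hr
    have habsK : ∀ w : ℂ, ‖Complex.exp (((b / a : ℝ) : ℂ) * ((a:ℂ) - 1)) * h w‖ ^ 2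
        = K^2 * ‖h w‖^2 := by
      intro w
      rw [norm_mul]
      have : (((b / a : ℝ)) : ℂ) * ((a:ℂ) - 1) = (((b/a*(a-1) : ℝ)) : ℂ) := by push_cast; ring
      rw [this, Complex.norm_exp, Complex.ofReal_re, hK]
      ring
    have harg : ∀ θ : ℝ, (a:ℂ) * ((r:ℂ) * Complex.exp ((θ:ℂ) * Complex.I)) + (1 - (a:ℂ))
        = (((1-a:ℝ)):ℂ) + (((a*r:ℝ)):ℂ) * Complex.exp ((θ:ℂ) * Complex.I) := by
      intro θ; push_cast; ring
    calc (∫ θ in (0:ℝ)..(2 * π), ‖(fun z => Complex.exp (((b / a : ℝ) : ℂ) * ((a:ℂ) - 1)) * h ((a:ℂ) * z + (1 - a)))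
            ((r:ℂ) * Complex.exp ((θ:ℂ) * Complex.I))‖ ^ 2)
        = ∫ θ in (0:ℝ)..(2 * π), K^2 * ‖h ((((1-a:ℝ)):ℂ) + (((a*r:ℝ)):ℂ) * Complex.exp ((θ:ℂ) * Complex.I))‖ ^ 2 := by
          apply intervalIntegral.integral_congr
          intro θ _
          simp only
          rw [habsK, harg θ]
      _ = K^2 * ∫ θ in (0:ℝ)..(2 * π), ‖h ((((1-a:ℝ)):ℂ) + (((a*r:ℝ)):ℂ) * Complex.exp ((θ:ℂ) * Complex.I))‖ ^ 2 := by
          rw [intervalIntegral.integral_const_mul]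
      _ ≤ K^2 * (4*C/a) := by
          apply mul_le_mul_of_nonneg_left key (by positivity)
  · intro z hz
    simp only
    rw [hfac ((a:ℂ) * z + (1 - a)) (mapsto z hz), part1 z hz]
    ring
end

section
/- Let h(z) = (1-z)^s + (1-z)^{s + 2πi/log a} for fixed a ∈ (0,1) and s ∈ ℂ, using principal branches. Then for b ∈ (0,1), there exists λ ∈ ℂ with h(bz + 1 - b) = λ h(z) for all z ∈ 𝔻 if and only if b = a^n for some positive integer n. -/
open Real

private lemma ofReal_mul_cpow {r : ℝ} (hr : 0 < r) {x : ℂ} (hx : x ≠ 0) (w : ℂ) :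
    ((r : ℂ) * x) ^ w = (r : ℂ) ^ w * x ^ w := by
  have hr' : (r : ℂ) ≠ 0 := by exact_mod_cast hr.ne'
  rw [Complex.cpow_def_of_ne_zero (mul_ne_zero hr' hx),
    Complex.log_ofReal_mul hr hx, add_mul, Complex.exp_add,
    Complex.cpow_def_of_ne_zero hr', Complex.cpow_def_of_ne_zero hx,
    Complex.ofReal_log hr.le]

/-- For `h(z) = (1-z)^s + (1-z)^{s + 2πi/log a}`, the map `h` is an eigenvector
of `C_{φ_b}` if and only if `b = a^n` for some positive integer `n`. -/
theorem common_eigenvector_example (a : ℝ) (ha : a ∈ Set.Ioo (0:ℝ) 1) (s : ℂ)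
    (h : ℂ → ℂ)
    (hdef : ∀ z : ℂ, h z =
      (1 - z) ^ s + (1 - z) ^ (s + 2 * Real.pi * Complex.I / (Real.log a : ℂ)))
    (b : ℝ) (hb : b ∈ Set.Ioo (0:ℝ) 1) :
    (∃ lam : ℂ, ∀ z ∈ Metric.ball (0:ℂ) 1,
        h ((b:ℂ) * z + (1 - b)) = lam * h z) ↔
      ∃ n : ℕ, 0 < n ∧ b = a ^ n := by
  obtain ⟨ha0, ha1⟩ := ha
  obtain ⟨hb0, hb1⟩ := hb
  set c : ℂ := 2 * Real.pi * Complex.I / (Real.log a : ℂ) with hc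
  have hla : Real.log a < 0 := Real.log_neg ha0 ha1
  have hla0 : (Real.log a : ℂ) ≠ 0 := by exact_mod_cast hla.ne
  have hlb : Real.log b < 0 := Real.log_neg hb0 hb1
  have hbC : (b : ℂ) ≠ 0 := by exact_mod_cast hb0.ne'
  -- b^c = exp(c * log b)
  have hbcpow : (b : ℂ) ^ c = Complex.exp ((Real.log b : ℂ) * c) := by
    rw [Complex.cpow_def_of_ne_zero hbC, Complex.ofReal_log hb0.le]
  constructor
  · rintro ⟨lam, H⟩
    set t : ℝ := Real.sqrt a with ht
    have ht0 : 0 < t := Real.sqrt_pos.2 ha0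
    have ht1 : t < 1 := by
      rw [ht, show (1:ℝ) = Real.sqrt 1 by simp]
      exact Real.sqrt_lt_sqrt ha0.le ha1
    have htC : (t : ℂ) ≠ 0 := by exact_mod_cast ht0.ne'
    -- t^c = -1
    have htc : (t : ℂ) ^ c = -1 := by
      rw [Complex.cpow_def_of_ne_zero htC, ← Complex.ofReal_log ht0.le, ht,
        Real.log_sqrt ha0.le]
      rw [show ((Real.log a / 2 : ℝ) : ℂ) * c = Real.pi * Complex.I by
        push_cast [hc]; field_simp]
      exact Complex.exp_pi_mul_I
    set z : ℂ := ((1 - t : ℝ) : ℂ) with hz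
    have hzball : z ∈ Metric.ball (0:ℂ) 1 := by
      simp only [Metric.mem_ball, dist_zero_right, hz, Complex.norm_real,
        Real.norm_eq_abs]
      rw [abs_of_pos (by linarith)]; linarith
    have key := H z hzball
    rw [hdef, hdef] at key
    have h1z : (1 : ℂ) - z = (t : ℂ) := by push_cast [hz]; ring
    have h1z' : (1:ℂ) - ((b:ℂ) * z + (1 - b)) = ((b * t : ℝ) : ℂ) := by
      push_cast [hz]; ring
    rw [h1z, h1z', Complex.ofReal_mul] at key
    rw [Complex.mul_cpow_ofReal_nonneg hb0.le ht0.le,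
      Complex.mul_cpow_ofReal_nonneg hb0.le ht0.le] at key
    have hts : ((t:ℂ)) ^ (s + c) = -(t:ℂ) ^ s := by
      rw [Complex.cpow_add _ _ htC, htc]; ring
    rw [hts] at key
    have hts0 : (t : ℂ) ^ s ≠ 0 := by
      simp [Complex.cpow_eq_zero_iff, htC]
    have hbs0 : (b : ℂ) ^ s ≠ 0 := by
      simp [Complex.cpow_eq_zero_iff, hbC]
    have hkey2 : (t:ℂ)^s * ((b:ℂ)^s - (b:ℂ)^(s+c)) = 0 := by
      rw [mul_sub]; linear_combination key
    have hbeq : (b:ℂ)^(s+c) = (b:ℂ)^s := by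
      rcases mul_eq_zero.1 hkey2 with h' | h'
      · exact absurd h' hts0
      · exact (sub_eq_zero.1 h').symm
    have hbc1 : (b:ℂ) ^ c = 1 := by
      have := hbeq
      rw [Complex.cpow_add _ _ hbC] at this
      exact mul_left_cancel₀ hbs0 (by rw [this, mul_one])
    rw [hbcpow, Complex.exp_eq_one_iff] at hbc1
    obtain ⟨n, hn⟩ := hbc1
    have h2piI : (2 * (Real.pi:ℂ) * Complex.I) ≠ 0 := by
      simp [Complex.I_ne_zero, Real.pi_ne_zero]
    have hratio : (Real.log b / Real.log a : ℝ) = (n : ℝ) := by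
      have : ((Real.log b / Real.log a : ℝ) : ℂ) = (n : ℂ) := by
        apply mul_right_cancel₀ h2piI
        push_cast
        rw [show (Real.log b : ℂ) / (Real.log a : ℂ) * (2 * (Real.pi:ℂ) * Complex.I)
            = (Real.log b : ℂ) * c by rw [hc]; field_simp, hn]
      exact_mod_cast this
    have hn0 : 0 < n := by
      have : (0:ℝ) < (n:ℝ) := by
        rw [← hratio]; exact div_pos_of_neg_of_neg hlb hla
      exact_mod_cast this
    refine ⟨n.toNat, by omega, ?_⟩
    have hnn : ((n.toNat : ℕ) : ℝ) = (n : ℝ) := by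
      exact_mod_cast congrArg (Int.cast : ℤ → ℝ) (Int.toNat_of_nonneg hn0.le)
    have hlogeq : Real.log b = (n.toNat : ℝ) * Real.log a := by
      rw [hnn]; exact (div_eq_iff hla.ne).1 hratio
    have : Real.log b = Real.log (a ^ n.toNat) := by
      rw [Real.log_pow]; exact_mod_cast hlogeq
    have := congrArg Real.exp this
    rwa [Real.exp_log hb0, Real.exp_log (pow_pos ha0 _)] at this
  · rintro ⟨n, hn, rfl⟩
    set b := a ^ n
    have hbc1 : (b:ℂ) ^ c = 1 := by
      rw [hbcpow, Real.log_pow, Complex.exp_eq_one_iff]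
      refine ⟨n, ?_⟩
      push_cast [hc]
      field_simp
    refine ⟨(b:ℂ) ^ s, fun z hz => ?_⟩
    have hz1 : (1:ℂ) - z ≠ 0 := by
      intro h0
      have : z = 1 := by linear_combination -h0
      simp [this] at hz
    rw [hdef, hdef]
    have h1z' : (1:ℂ) - ((b:ℂ) * z + (1 - b)) = (b:ℂ) * (1 - z) := by ring
    rw [h1z', ofReal_mul_cpow hb0 hz1, ofReal_mul_cpow hb0 hz1,
      Complex.cpow_add _ _ hbC, hbc1, mul_one, mul_add]
end

section
/- Let f be holomorphic on the half-plane ℍ = {Re z < 1}, a ∈ (0,1), λ ≠ 0, with f(az + 1 - a) = λ f(z) on ℍ. If g is holomorphic on 𝔻 and agrees with f on 𝔻, then f is the unique holomorphic extension of g to ℍ; conversely, any holomorphic g on 𝔻 satisfying g(az+1-a) = λ g(z) on 𝔻 extends holomorphically to ℍ via the formula f(z) = λ^{-n} g(a^n z + 1 - a^n) on the disk 𝔻_n = {|z - (1-a^{-n})| < a^{-n}}, and these formulas are consistent on overlaps. -/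
/-!
The affine map `z ↦ a^n z + 1 - a^n` sends the disk of radius `a^{-n}` tangent to `Re z = 1`
at `1` onto the unit disk, so `λ^{-n} g(a^n z + 1 - a^n)` is holomorphic there. Iterating the
functional equation shows that the formulas for `k ≤ n` agree on the smaller disk, and these
nested disks exhaust the half-plane, since `z` with `Re z < 1` lies in the disk of radius `r` as
soon as `r > |z - 1|² / (2 (1 - Re z))`. Uniqueness is the identity theorem on the connected
half-plane.
-/

open Metric Filter Topology Set

def tangentDisk (r : ℝ) : Set ℂ := ball (1 - (r : ℂ)) r

theorem tangentDisk_one : tangentDisk 1 = ball 0 1 := by simp [tangentDisk]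

theorem tangentDisk_mono : Monotone tangentDisk := fun r s hrs =>
  ball_subset_ball' <| by
    rw [Complex.dist_eq, show (1 - r : ℂ) - (1 - s) = ((s - r : ℝ) : ℂ) by push_cast; ring,
      Complex.norm_of_nonneg (sub_nonneg.2 hrs)]
    linarith

theorem mem_tangentDisk_inv_iff {t : ℝ} (ht : 0 < t) {z : ℂ} :
    z ∈ tangentDisk t⁻¹ ↔ (t : ℂ) * z + 1 - t ∈ ball (0 : ℂ) 1 := by
  have hscale : (t : ℂ) * z + 1 - t = t * (z - (1 - ((t⁻¹ : ℝ) : ℂ))) := by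
    have : (t : ℂ) ≠ 0 := by exact_mod_cast ht.ne'
    push_cast; field_simp; ring
  rw [tangentDisk, mem_ball, mem_ball_zero_iff, hscale, norm_mul, Complex.norm_of_nonneg ht.le,
    ← dist_eq_norm, ← lt_div_iff₀' ht, one_div]

theorem eventually_mem_tangentDisk {z : ℂ} (hz : z.re < 1) :
    ∀ᶠ r in atTop, z ∈ tangentDisk r := by
  filter_upwards [eventually_gt_atTop (‖z - 1‖ ^ 2 / (2 * (1 - z.re))), eventually_gt_atTop 0]
    with r hr hr0
  rw [div_lt_iff₀ (by linarith), Complex.sq_norm, Complex.normSq_apply] at hr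
  rw [tangentDisk, mem_ball, Complex.dist_eq]
  refine lt_of_pow_lt_pow_left₀ 2 hr0.le ?_
  rw [Complex.sq_norm, Complex.normSq_apply]
  simp only [Complex.sub_re, Complex.sub_im, Complex.one_re, Complex.one_im, Complex.ofReal_re,
    Complex.ofReal_im] at hr ⊢
  nlinarith

theorem mul_add_one_sub_mem_ball {t : ℝ} (h0 : 0 < t) (h1 : t ≤ 1) {w : ℂ}
    (hw : w ∈ ball (0 : ℂ) 1) : (t : ℂ) * w + 1 - t ∈ ball (0 : ℂ) 1 :=
  (mem_tangentDisk_inv_iff h0).1 <|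
    tangentDisk_mono ((one_le_inv₀ h0).2 h1) (tangentDisk_one ▸ hw)

section Extension

variable {a : ℝ} {lam : ℂ} {g : ℂ → ℂ}

theorem mem_tangentDisk_inv_pow_iff (ha0 : 0 < a) (n : ℕ) {z : ℂ} :
    z ∈ tangentDisk (a⁻¹ ^ n) ↔ (a : ℂ) ^ n * z + 1 - (a : ℂ) ^ n ∈ ball (0 : ℂ) 1 := by
  rw [inv_pow]
  exact_mod_cast mem_tangentDisk_inv_iff (pow_pos ha0 n)

theorem apply_affine_pow_eq (ha0 : 0 < a) (ha1 : a ≤ 1)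
    (heq : ∀ z ∈ ball (0 : ℂ) 1, g ((a : ℂ) * z + (1 - a)) = lam * g z) (m : ℕ) {w : ℂ}
    (hw : w ∈ ball (0 : ℂ) 1) : g ((a : ℂ) ^ m * w + 1 - (a : ℂ) ^ m) = lam ^ m * g w := by
  induction m generalizing w with
  | zero => simp
  | succ m ih =>
    have hw' : (a : ℂ) * w + 1 - a ∈ ball (0 : ℂ) 1 := mul_add_one_sub_mem_ball ha0 ha1 hw
    calc g ((a : ℂ) ^ (m + 1) * w + 1 - (a : ℂ) ^ (m + 1))
        = g ((a : ℂ) ^ m * ((a : ℂ) * w + 1 - a) + 1 - (a : ℂ) ^ m) := by ring_nf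
      _ = lam ^ m * g ((a : ℂ) * w + (1 - a)) := by rw [ih hw', add_sub_assoc]
      _ = lam ^ (m + 1) * g w := by rw [heq w hw, pow_succ, mul_assoc]

noncomputable def diskExtension (a : ℝ) (lam : ℂ) (g : ℂ → ℂ) (n : ℕ) (z : ℂ) : ℂ :=
  lam⁻¹ ^ n * g ((a : ℂ) ^ n * z + 1 - (a : ℂ) ^ n)

theorem diskExtension_eq_of_le (hlam : lam ≠ 0) (ha0 : 0 < a) (ha1 : a ≤ 1)
    (heq : ∀ z ∈ ball (0 : ℂ) 1, g ((a : ℂ) * z + (1 - a)) = lam * g z) {k n : ℕ} (hkn : k ≤ n)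
    {z : ℂ} (hz : z ∈ tangentDisk (a⁻¹ ^ k)) :
    diskExtension a lam g n z = diskExtension a lam g k z := by
  obtain ⟨m, rfl⟩ := Nat.exists_eq_add_of_le hkn
  have hw := (mem_tangentDisk_inv_pow_iff ha0 k).1 hz
  calc diskExtension a lam g (k + m) z
      = lam⁻¹ ^ (k + m) *
          g ((a : ℂ) ^ m * ((a : ℂ) ^ k * z + 1 - (a : ℂ) ^ k) + 1 - (a : ℂ) ^ m) := by
        rw [diskExtension]; ring_nf
    _ = diskExtension a lam g k z := by
        rw [apply_affine_pow_eq ha0 ha1 heq m hw, diskExtension, pow_add, mul_assoc,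
          ← mul_assoc (lam⁻¹ ^ m), inv_pow lam m, inv_mul_cancel₀ (pow_ne_zero m hlam), one_mul]

theorem differentiableOn_diskExtension (hg : DifferentiableOn ℂ g (ball (0 : ℂ) 1))
    (ha0 : 0 < a) (n : ℕ) :
    DifferentiableOn ℂ (diskExtension a lam g n) (tangentDisk (a⁻¹ ^ n)) :=
  (hg.comp (by fun_prop) fun _ hz => (mem_tangentDisk_inv_pow_iff ha0 n).1 hz).const_mul _

theorem exists_mem_tangentDisk_inv_pow (ha0 : 0 < a) (ha1 : a < 1) {z : ℂ} (hz : z.re < 1) :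
    ∃ n, z ∈ tangentDisk (a⁻¹ ^ n) :=
  ((tendsto_pow_atTop_atTop_of_one_lt ((one_lt_inv₀ ha0).2 ha1)).eventually
    (eventually_mem_tangentDisk hz)).exists

open Classical in
noncomputable def eigenExtension (a : ℝ) (lam : ℂ) (g : ℂ → ℂ) (z : ℂ) : ℂ :=
  if h : ∃ n, z ∈ tangentDisk (a⁻¹ ^ n) then diskExtension a lam g h.choose z else 0

theorem eigenExtension_eq_diskExtension (hlam : lam ≠ 0) (ha0 : 0 < a) (ha1 : a ≤ 1)
    (heq : ∀ z ∈ ball (0 : ℂ) 1, g ((a : ℂ) * z + (1 - a)) = lam * g z) {n : ℕ} {z : ℂ}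
    (hz : z ∈ tangentDisk (a⁻¹ ^ n)) :
    eigenExtension a lam g z = diskExtension a lam g n z := by
  have h : ∃ k, z ∈ tangentDisk (a⁻¹ ^ k) := ⟨n, hz⟩
  rw [eigenExtension, dif_pos h,
    ← diskExtension_eq_of_le hlam ha0 ha1 heq (le_max_left _ n) h.choose_spec,
    diskExtension_eq_of_le hlam ha0 ha1 heq (le_max_right _ n) hz]

theorem differentiableOn_eigenExtension (hg : DifferentiableOn ℂ g (ball (0 : ℂ) 1))
    (hlam : lam ≠ 0) (ha0 : 0 < a) (ha1 : a < 1)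
    (heq : ∀ z ∈ ball (0 : ℂ) 1, g ((a : ℂ) * z + (1 - a)) = lam * g z) :
    DifferentiableOn ℂ (eigenExtension a lam g) {z : ℂ | z.re < 1} := by
  intro z hz
  obtain ⟨n, hzn⟩ := exists_mem_tangentDisk_inv_pow ha0 ha1 hz
  have hnhds : tangentDisk (a⁻¹ ^ n) ∈ 𝓝 z := isOpen_ball.mem_nhds hzn
  have hext : eigenExtension a lam g =ᶠ[𝓝 z] diskExtension a lam g n :=
    eventually_of_mem hnhds fun _ hw => eigenExtension_eq_diskExtension hlam ha0 ha1.le heq hw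
  exact ((differentiableOn_diskExtension hg ha0 n z hzn).differentiableAt hnhds
    |>.congr_of_eventuallyEq hext).differentiableWithinAt

end Extension

theorem eqOn_of_eqOn_ball {U : Set ℂ} {f f' : ℂ → ℂ} (hU : IsOpen U) (hU' : IsPreconnected U)
    (hf : DifferentiableOn ℂ f U) (hf' : DifferentiableOn ℂ f' U) {c : ℂ} {r : ℝ} (hr : 0 < r)
    (hcU : c ∈ U) (h : EqOn f f' (ball c r)) : EqOn f f' U :=
  (hf.analyticOnNhd hU).eqOn_of_preconnected_of_eventuallyEq (hf'.analyticOnNhd hU) hU' hcU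
    (eventually_of_mem (ball_mem_nhds c hr) h)

/-- Any holomorphic `g` on 𝔻 with `g ∘ φ_a = λ g` (`λ ≠ 0`) extends holomorphically
to `ℍ = {Re z < 1}` via `f(z) = λ^{-n} g(a^n z + 1 - a^n)` on the disks
`𝔻_n = {|z - (1 - a^{-n})| < a^{-n}}`, and this extension is unique. -/
theorem eigenvector_extension (a : ℝ) (ha : a ∈ Set.Ioo (0:ℝ) 1)
    (lam : ℂ) (hlam : lam ≠ 0) (g : ℂ → ℂ)
    (hg : DifferentiableOn ℂ g (Metric.ball (0:ℂ) 1))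
    (heq : ∀ z ∈ Metric.ball (0:ℂ) 1, g ((a:ℂ) * z + (1 - a)) = lam * g z) :
    ∃ f : ℂ → ℂ,
      DifferentiableOn ℂ f {z : ℂ | z.re < 1} ∧
      (∀ z ∈ Metric.ball (0:ℂ) 1, f z = g z) ∧
      (∀ n : ℕ, ∀ z ∈ Metric.ball ((1:ℂ) - ((a⁻¹:ℝ)^n : ℝ)) ((a⁻¹:ℝ)^n),
        f z = lam⁻¹ ^ n * g ((a:ℂ)^n * z + 1 - (a:ℂ)^n)) ∧
      (∀ f' : ℂ → ℂ, DifferentiableOn ℂ f' {z : ℂ | z.re < 1} →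
        (∀ z ∈ Metric.ball (0:ℂ) 1, f' z = g z) →
        ∀ z ∈ {z : ℂ | z.re < 1}, f' z = f z) := by
  obtain ⟨ha0, ha1⟩ := ha
  have hf_disk : ∀ n : ℕ, ∀ z ∈ tangentDisk (a⁻¹ ^ n),
      eigenExtension a lam g z = diskExtension a lam g n z :=
    fun n _ hz => eigenExtension_eq_diskExtension hlam ha0 ha1.le heq hz
  have hf_ball : ∀ z ∈ ball (0 : ℂ) 1, eigenExtension a lam g z = g z := fun z hz => by
    simpa [diskExtension] using hf_disk 0 z (by rwa [pow_zero, tangentDisk_one])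
  have hf := differentiableOn_eigenExtension hg hlam ha0 ha1 heq
  refine ⟨eigenExtension a lam g, hf, hf_ball, hf_disk, fun f' hf' hf'g => ?_⟩
  exact eqOn_of_eqOn_ball (isOpen_lt Complex.continuous_re continuous_const)
    (convex_halfSpace_re_lt 1).isPreconnected hf' hf one_pos (by simp)
    fun z hz => (hf'g z hz).trans (hf_ball z hz).symm
end

section
/- Let A ⊆ (0,1) be a nonempty set satisfying: (i) if a, b ∈ A then ab ∈ A; (ii) if a, b ∈ A and a < b then a/b ∈ A; (iii) A is closed in (0,1); (iv) A has empty interior in (0,1). Then A = {c^n : n ≥ 1} for some c ∈ (0,1). -/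
lemma S_dichotomy (S : Set ℝ) (hpos : ∀ s ∈ S, 0 < s) (hne : S.Nonempty)
    (hadd : ∀ s ∈ S, ∀ t ∈ S, s + t ∈ S)
    (hsub : ∀ s ∈ S, ∀ t ∈ S, t < s → s - t ∈ S) :
    (Set.Ioi (0:ℝ) ⊆ closure S) ∨ ∃ d ∈ S, S = {x | ∃ n : ℕ, 0 < n ∧ x = (n:ℝ) * d} := by
  -- build the subgroup
  set Gc : Set ℝ := {x | x ∈ S ∨ -x ∈ S ∨ x = 0} with hGc
  have hGadd : ∀ x ∈ Gc, ∀ y ∈ Gc, x + y ∈ Gc := by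
    intro x hx y hy
    rcases hx with hx | hx | hx
    · rcases hy with hy | hy | hy
      · exact Or.inl (hadd _ hx _ hy)
      · rcases lt_trichotomy x (-y) with h | h | h
        · refine Or.inr (Or.inl ?_)
          have := hsub _ hy _ hx h
          convert this using 1; ring
        · exact Or.inr (Or.inr (by rw [h]; ring))
        · refine Or.inl ?_
          have := hsub _ hx _ hy h
          convert this using 1; ring
      · exact Or.inl (by rw [hy, add_zero]; exact hx)
    · rcases hy with hy | hy | hy
      · rcases lt_trichotomy y (-x) with h | h | h
        · refine Or.inr (Or.inl ?_)
          have := hsub _ hx _ hy h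
          convert this using 1; ring
        · exact Or.inr (Or.inr (by rw [h]; ring))
        · refine Or.inl ?_
          have := hsub _ hy _ hx h
          convert this using 1; ring
      · refine Or.inr (Or.inl ?_)
        have := hadd _ hx _ hy
        convert this using 1; ring
      · exact Or.inr (Or.inl (by rw [hy, add_zero]; exact hx))
    · rcases hy with hy | hy | hy
      · exact Or.inl (by rw [hx, zero_add]; exact hy)
      · exact Or.inr (Or.inl (by rw [hx, zero_add]; exact hy))
      · exact Or.inr (Or.inr (by rw [hx, hy, add_zero]))
  let G : AddSubgroup ℝ :=
    { carrier := Gc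
      zero_mem' := Or.inr (Or.inr rfl)
      neg_mem' := by
        intro x hx
        rcases hx with hx | hx | hx
        · exact Or.inr (Or.inl (by rwa [neg_neg]))
        · exact Or.inl hx
        · exact Or.inr (Or.inr (by rw [hx, neg_zero]))
      add_mem' := fun {x y} hx hy => hGadd x hx y hy }
  have hGmem : ∀ x : ℝ, x ∈ G ↔ (x ∈ S ∨ -x ∈ S ∨ x = 0) := fun x => Iff.rfl
  rcases AddSubgroup.dense_or_cyclic G with hd | ⟨a, ha⟩
  · -- dense case
    left
    intro t ht
    have h1 : t ∈ closure (Set.Ioi (0:ℝ) ∩ (G : Set ℝ)) :=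
      hd.open_subset_closure_inter isOpen_Ioi ht
    refine closure_mono ?_ h1
    rintro g ⟨hg0, hgG⟩
    rcases (hGmem g).mp hgG with h | h | h
    · exact h
    · exact absurd (hpos _ h) (by simp at hg0 ⊢; linarith [hg0.le])
    · exact absurd h (ne_of_gt hg0)
  · -- cyclic case
    right
    obtain ⟨s₀, hs₀⟩ := hne
    have hsG : ∀ s ∈ S, ∃ k : ℤ, k • a = s := by
      intro s hs
      have : s ∈ G := Or.inl hs
      rw [ha] at this
      exact AddSubgroup.mem_closure_singleton.mp this
    have hane : a ≠ 0 := by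
      rintro rfl
      obtain ⟨k, hk⟩ := hsG s₀ hs₀
      simp at hk
      exact absurd (hpos _ hs₀) (by rw [← hk]; simp)
    have hform : ∀ s ∈ S, ∃ n : ℕ, 0 < n ∧ s = (n:ℝ) * |a| := by
      intro s hs
      obtain ⟨k, hk⟩ := hsG s hs
      have hspos := hpos s hs
      refine ⟨k.natAbs, ?_, ?_⟩
      · rcases Nat.eq_zero_or_pos k.natAbs with h | h
        · exfalso
          have : k = 0 := Int.natAbs_eq_zero.mp h
          rw [this] at hk; simp at hk; rw [← hk] at hspos; exact lt_irrefl _ hspos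
        · exact h
      · have : s = |s| := (abs_of_pos hspos).symm
        rw [this, ← hk, zsmul_eq_mul, abs_mul, Nat.cast_natAbs, Int.cast_abs]
    set N : Set ℕ := {n | 0 < n ∧ (n:ℝ) * |a| ∈ S} with hN
    have hNne : N.Nonempty := by
      obtain ⟨n, hn0, hn⟩ := hform s₀ hs₀
      exact ⟨n, hn0, hn ▸ hs₀⟩
    set m := sInf N with hm
    have hmN : m ∈ N := Nat.sInf_mem hNne
    have hapos : (0:ℝ) < |a| := abs_pos.mpr hane
    have hm0 : 0 < m := hmN.1
    have hdvd : ∀ n, n ∈ N → m ∣ n := by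
      intro n
      induction n using Nat.strong_induction_on with
      | _ n ih =>
        intro hn
        have hmn : m ≤ n := Nat.sInf_le hn
        rcases eq_or_lt_of_le hmn with h | h
        · exact h ▸ dvd_refl m
        · have hlt : (m:ℝ) * |a| < (n:ℝ) * |a| := by
            apply mul_lt_mul_of_pos_right _ hapos
            exact_mod_cast h
          have h1 : ((n - m : ℕ):ℝ) * |a| ∈ S := by
            have := hsub _ hn.2 _ hmN.2 hlt
            convert this using 1
            rw [Nat.cast_sub hmn]; ring
          have h2 : n - m ∈ N := ⟨by omega, h1⟩
          have hd2 := ih (n - m) (by omega) h2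
          have := Nat.dvd_add hd2 (dvd_refl m)
          rwa [Nat.sub_add_cancel hmn] at this
    refine ⟨(m:ℝ) * |a|, hmN.2, ?_⟩
    ext x
    constructor
    · intro hx
      obtain ⟨n, hn0, rfl⟩ := hform x hx
      have hnN : n ∈ N := ⟨hn0, hx⟩
      obtain ⟨k, rfl⟩ := hdvd n hnN
      have hk0 : 0 < k := by
        rcases Nat.eq_zero_or_pos k with h | h
        · subst h; simp at hn0
        · exact h
      refine ⟨k, hk0, ?_⟩
      push_cast; ring
    · rintro ⟨n, hn0, rfl⟩
      induction n with
      | zero => omega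
      | succ n ih =>
        rcases Nat.eq_zero_or_pos n with h | h
        · subst h; simpa using hmN.2
        · have := hadd _ (ih h) _ hmN.2
          convert this using 1
          push_cast; ring

/-- A nonempty subset of `(0,1)` closed under multiplication and under division
of a smaller element by a larger one, which is closed in `(0,1)` and has empty
interior, is the set of powers `{c^n : n ≥ 1}` of some `c ∈ (0,1)`. -/
theorem geometric_structure (A : Set ℝ) (hA : A ⊆ Set.Ioo (0:ℝ) 1)
    (hne : A.Nonempty)
    (hmul : ∀ a ∈ A, ∀ b ∈ A, a * b ∈ A)
    (hdiv : ∀ a ∈ A, ∀ b ∈ A, a < b → a / b ∈ A)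
    (hclosed : IsClosed (Subtype.val ⁻¹' A : Set (Set.Ioo (0:ℝ) 1)))
    (hint : interior A = ∅) :
    ∃ c ∈ Set.Ioo (0:ℝ) 1, A = {x : ℝ | ∃ n : ℕ, 0 < n ∧ x = c ^ n} := by
  -- relative closedness
  obtain ⟨C, hC, hCA⟩ := isClosed_induced_iff.mp hclosed
  have hAC : A ⊆ C := by
    intro x hx
    have : (⟨x, hA hx⟩ : Set.Ioo (0:ℝ) 1) ∈ Subtype.val ⁻¹' A := hx
    rw [← hCA] at this
    exact this
  have hrel : ∀ x ∈ Set.Ioo (0:ℝ) 1, x ∈ closure A → x ∈ A := by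
    intro x hx hxc
    have hxC : x ∈ C := closure_minimal hAC hC hxc
    have : (⟨x, hx⟩ : Set.Ioo (0:ℝ) 1) ∈ Subtype.val ⁻¹' C := hxC
    rw [hCA] at this
    exact this
  -- pass to logs
  set S : Set ℝ := (fun a => -Real.log a) '' A with hS
  have hmem : ∀ a ∈ A, -Real.log a ∈ S := fun a ha => ⟨a, ha, rfl⟩
  have hpos : ∀ s ∈ S, 0 < s := by
    rintro s ⟨a, ha, rfl⟩
    have := hA ha
    simpa using Real.log_neg this.1 this.2
  have hSne : S.Nonempty := hne.image _
  have hadd : ∀ s ∈ S, ∀ t ∈ S, s + t ∈ S := by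
    rintro s ⟨a, ha, rfl⟩ t ⟨b, hb, rfl⟩
    refine ⟨a * b, hmul a ha b hb, ?_⟩
    show -Real.log (a * b) = -Real.log a + -Real.log b
    rw [Real.log_mul (ne_of_gt (hA ha).1) (ne_of_gt (hA hb).1)]
    ring
  have hsub : ∀ s ∈ S, ∀ t ∈ S, t < s → s - t ∈ S := by
    rintro s ⟨a, ha, rfl⟩ t ⟨b, hb, rfl⟩ hlt
    dsimp only at hlt
    have hab : a < b := by
      have h1 : Real.log a < Real.log b := by linarith
      exact (Real.log_lt_log_iff (hA ha).1 (hA hb).1).mp h1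
    refine ⟨a / b, hdiv a ha b hb hab, ?_⟩
    show -Real.log (a / b) = -Real.log a - -Real.log b
    rw [Real.log_div (ne_of_gt (hA ha).1) (ne_of_gt (hA hb).1)]
    ring
  rcases S_dichotomy S hpos hSne hadd hsub with hd | ⟨d, hdS, hSd⟩
  · -- dense case: contradiction
    exfalso
    have himA : (fun s => Real.exp (-s)) '' S = A := by
      rw [hS, Set.image_image]
      have : ∀ a ∈ A, Real.exp (-(-Real.log a)) = a := by
        intro a ha
        rw [neg_neg, Real.exp_log (hA ha).1]
      calc (fun a => Real.exp (-(-Real.log a))) '' A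
          = id '' A := Set.image_congr (fun a ha => by simp [Real.exp_log (hA ha).1])
        _ = A := Set.image_id A
    have hsubA : Set.Ioo (0:ℝ) 1 ⊆ A := by
      intro x hx
      have hlx : Real.log x < 0 := Real.log_neg hx.1 hx.2
      have ht : -Real.log x ∈ Set.Ioi (0:ℝ) := by simpa using hlx
      have h1 : -Real.log x ∈ closure S := hd ht
      have h2 : Real.exp (-(-Real.log x)) ∈ (fun s => Real.exp (-s)) '' closure S :=
        ⟨_, h1, rfl⟩
      have hcont : Continuous (fun s : ℝ => Real.exp (-s)) :=
        Real.continuous_exp.comp continuous_neg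
      have h3 : Real.exp (-(-Real.log x)) ∈ closure ((fun s => Real.exp (-s)) '' S) :=
        image_closure_subset_closure_image hcont h2
      rw [himA] at h3
      rw [neg_neg, Real.exp_log hx.1] at h3
      exact hrel x hx h3
    have : (1/2 : ℝ) ∈ interior A :=
      interior_maximal hsubA isOpen_Ioo (by norm_num)
    rw [hint] at this
    exact this
  · -- cyclic case
    have hd0 : 0 < d := hpos d hdS
    refine ⟨Real.exp (-d), ⟨Real.exp_pos _, by
      rw [show (1:ℝ) = Real.exp 0 by simp]
      exact Real.exp_lt_exp.mpr (by linarith)⟩, ?_⟩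
    have hcA : Real.exp (-d) ∈ A := by
      obtain ⟨a, ha, hae⟩ := hdS
      rw [← hae, neg_neg, Real.exp_log (hA ha).1]
      exact ha
    ext x
    constructor
    · intro hx
      have : -Real.log x ∈ S := hmem x hx
      rw [hSd] at this
      obtain ⟨n, hn0, hn⟩ := this
      refine ⟨n, hn0, ?_⟩
      have hx0 := (hA hx).1
      rw [← Real.exp_log hx0]
      rw [← Real.exp_nat_mul]
      congr 1
      linarith
    · rintro ⟨n, hn0, rfl⟩
      induction n with
      | zero => omega
      | succ n ih =>
        rcases Nat.eq_zero_or_pos n with h | h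
        · subst h; simpa using hcA
        · have := hmul _ (ih h) _ hcA
          rw [← pow_succ] at this
          exact this
end
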